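/- For the dihedral quandle R_8, the order of the quotient group Δ²(R_8)/Δ³(R_8) is 16. -/

import Mathlib

/-- Dihedral quandle operation on `ZMod n`: `a · b = 2b - a`. -/
def dq (n : ℕ) (a b : ZMod n) : ZMod n := 2 * b - a

/-- Quandle ring multiplication on `ℤ[R_n] = ZMod n →₀ ℤ`. -/
noncomputable def qmul (n : ℕ) (x y : ZMod n →₀ ℤ) : ZMod n →₀ ℤ :=
  x.sum fun a r => y.sum fun b s => Finsupp.single (dq n a b) (r * s)

/-- Augmentation map. -/
noncomputable def aug (n : ℕ) : (ZMod n →₀ ℤ) →ₗ[ℤ] ℤ :=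
  Finsupp.lsum ℤ fun _ => LinearMap.id

/-- `e i = a_i - a_0`. -/
noncomputable def e (n : ℕ) (i : ZMod n) : ZMod n →₀ ℤ :=
  Finsupp.single i 1 - Finsupp.single 0 1

/-- Augmentation ideal. -/
noncomputable def Δ (n : ℕ) : Submodule ℤ (ZMod n →₀ ℤ) := LinearMap.ker (aug n)

noncomputable def Δ2 (n : ℕ) : Submodule ℤ (ZMod n →₀ ℤ) :=
  Submodule.span ℤ {z | ∃ x ∈ Δ n, ∃ y ∈ Δ n, z = qmul n x y}

noncomputable def Δ3 (n : ℕ) : Submodule ℤ (ZMod n →₀ ℤ) :=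
  Submodule.span ℤ {z | ∃ x ∈ Δ2 n, ∃ y ∈ Δ n, z = qmul n x y}

open Finsupp

noncomputable def Bq (n : ℕ) : (ZMod n →₀ ℤ) →ₗ[ℤ] (ZMod n →₀ ℤ) →ₗ[ℤ] (ZMod n →₀ ℤ) :=
  Finsupp.lsum ℤ fun a => LinearMap.toSpanSingleton ℤ _
    (Finsupp.lsum ℤ fun b => Finsupp.lsingle (dq n a b))

lemma qmul_eq (n : ℕ) (x y : ZMod n →₀ ℤ) : qmul n x y = Bq n x y := by
  rw [qmul, Bq, Finsupp.lsum_apply]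
  rw [show ((x.sum fun a r => LinearMap.toSpanSingleton ℤ _
      (Finsupp.lsum ℤ fun b => Finsupp.lsingle (dq n a b)) r) y)
    = x.sum fun a r => (LinearMap.toSpanSingleton ℤ _
      (Finsupp.lsum ℤ fun b => Finsupp.lsingle (dq n a b)) r) y from
    map_finsuppSum (LinearMap.applyₗ y) _ _]
  refine Finsupp.sum_congr fun a _ => ?_
  rw [LinearMap.toSpanSingleton_apply, LinearMap.smul_apply, Finsupp.lsum_apply,
    Finsupp.smul_sum]
  refine Finsupp.sum_congr fun b _ => ?_
  rw [Finsupp.lsingle_apply, Finsupp.smul_single', mul_comm]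

lemma qmul_single (n : ℕ) (a b : ZMod n) (r s : ℤ) :
    qmul n (Finsupp.single a r) (Finsupp.single b s) = Finsupp.single (dq n a b) (r * s) := by
  rw [qmul_eq, Bq, Finsupp.lsum_single, LinearMap.toSpanSingleton_apply, LinearMap.smul_apply,
    Finsupp.lsum_single, Finsupp.lsingle_apply, Finsupp.smul_single', mul_comm]

lemma qmul_mem_span (n : ℕ) {S T : Set (ZMod n →₀ ℤ)} {x y : ZMod n →₀ ℤ}
    (hx : x ∈ Submodule.span ℤ S) (hy : y ∈ Submodule.span ℤ T) :
    qmul n x y ∈ Submodule.span ℤ (Set.image2 (qmul n) S T) := by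
  rw [qmul_eq]
  induction hx using Submodule.span_induction with
  | mem s hs =>
    induction hy using Submodule.span_induction with
    | mem t ht => exact Submodule.subset_span ⟨s, hs, t, ht, qmul_eq n s t⟩
    | zero => simp
    | add y₁ y₂ _ _ h1 h2 => rw [map_add]; exact Submodule.add_mem _ h1 h2
    | smul c y₁ _ h1 => rw [map_smul]; exact Submodule.smul_mem _ _ h1
  | zero => simp
  | add x₁ x₂ _ _ h1 h2 => rw [map_add, LinearMap.add_apply]; exact Submodule.add_mem _ h1 h2
  | smul c x₁ _ h1 => rw [map_smul, LinearMap.smul_apply]; exact Submodule.smul_mem _ _ h1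

lemma aug_single (n : ℕ) (a : ZMod n) (r : ℤ) : aug n (Finsupp.single a r) = r := by
  rw [aug, Finsupp.lsum_single]; rfl

lemma e_mem_Delta (n : ℕ) (i : ZMod n) : e n i ∈ Δ n := by
  simp [Δ, LinearMap.mem_ker, e, map_sub, aug_single]

lemma Delta_le_span (n : ℕ) : Δ n ≤ Submodule.span ℤ (Set.range (e n)) := by
  intro x hx
  have hx0 : aug n x = 0 := hx
  have hrep : x = x.sum fun i r => r • e n i := by
    have h1 : (x.sum fun i r => r • e n i)
        = (x.sum fun i r => Finsupp.single i r) - x.sum fun i r => Finsupp.single 0 r := by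
      rw [← Finsupp.sum_sub]
      refine Finsupp.sum_congr fun i _ => ?_
      simp [e, smul_sub, Finsupp.smul_single']
    have h2 : (x.sum fun i r => Finsupp.single (0 : ZMod n) r)
        = Finsupp.single 0 (aug n x) := by
      rw [aug, Finsupp.lsum_apply]
      exact (map_finsuppSum (Finsupp.singleAddHom (0 : ZMod n)) x fun _ r => r).symm
    rw [h1, h2, hx0, Finsupp.single_zero, sub_zero, Finsupp.sum_single]
  rw [hrep]
  exact Submodule.sum_mem _ fun i _ => Submodule.smul_mem _ _
    (Submodule.subset_span (Set.mem_range_self i))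

/-- generators of Δ2 -/
noncomputable def fg (i j : ZMod 8) : ZMod 8 →₀ ℤ := qmul 8 (e 8 i) (e 8 j)
/-- generators of Δ3 -/
noncomputable def gg (i j k : ZMod 8) : ZMod 8 →₀ ℤ := qmul 8 (fg i j) (e 8 k)

def Fset : Set (ZMod 8 →₀ ℤ) := Set.image2 (qmul 8) (Set.range (e 8)) (Set.range (e 8))
def Gset : Set (ZMod 8 →₀ ℤ) := Set.image2 (qmul 8) Fset (Set.range (e 8))

lemma fg_mem (i j : ZMod 8) : fg i j ∈ Δ2 8 :=
  Submodule.subset_span ⟨e 8 i, e_mem_Delta 8 i, e 8 j, e_mem_Delta 8 j, rfl⟩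

lemma Fset_sub : Fset ⊆ (Δ2 8 : Set _) := by
  rintro z ⟨s, ⟨i, rfl⟩, t, ⟨j, rfl⟩, rfl⟩
  exact fg_mem i j

lemma Delta2_le : Δ2 8 ≤ Submodule.span ℤ Fset := by
  rw [Δ2, Submodule.span_le]
  rintro z ⟨x, hx, y, hy, rfl⟩
  exact qmul_mem_span 8 (Delta_le_span 8 hx) (Delta_le_span 8 hy)

lemma Delta3_le : Δ3 8 ≤ Submodule.span ℤ Gset := by
  rw [Δ3, Submodule.span_le]
  rintro z ⟨x, hx, y, hy, rfl⟩
  exact qmul_mem_span 8 (Delta2_le hx) (Delta_le_span 8 hy)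

lemma gg_mem (i j k : ZMod 8) : gg i j k ∈ Δ3 8 :=
  Submodule.subset_span ⟨fg i j, fg_mem i j, e 8 k, e_mem_Delta 8 k, rfl⟩

lemma qmul_sub_left (x y z : ZMod 8 →₀ ℤ) : qmul 8 (x - y) z = qmul 8 x z - qmul 8 y z := by
  simp [qmul_eq, map_sub]
lemma qmul_sub_right (x y z : ZMod 8 →₀ ℤ) : qmul 8 x (y - z) = qmul 8 x y - qmul 8 x z := by
  simp [qmul_eq, map_sub]
lemma qmul_add_left (x y z : ZMod 8 →₀ ℤ) : qmul 8 (x + y) z = qmul 8 x z + qmul 8 y z := by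
  simp [qmul_eq, map_add]
lemma qmul_add_right (x y z : ZMod 8 →₀ ℤ) : qmul 8 x (y + z) = qmul 8 x y + qmul 8 x z := by
  simp [qmul_eq, map_add]
lemma qmul_smul_left (c : ℤ) (x z : ZMod 8 →₀ ℤ) : qmul 8 (c • x) z = c • qmul 8 x z := by
  simp [qmul_eq, map_smul]
lemma qmul_smul_right (c : ℤ) (x z : ZMod 8 →₀ ℤ) : qmul 8 x (c • z) = c • qmul 8 x z := by
  simp [qmul_eq, map_smul]

def W : ZMod 8 → ZMod 16 × ZMod 16 :=
  ![(7,7), (7,2), (1,5), (9,12), (15,15), (15,2), (1,5), (9,4)]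

noncomputable def ψ : (ZMod 8 →₀ ℤ) →ₗ[ℤ] ZMod 16 × ZMod 16 :=
  Finsupp.lsum ℤ fun a => LinearMap.toSpanSingleton ℤ _ (W a)

lemma psi_single (a : ZMod 8) (r : ℤ) : ψ (Finsupp.single a r) = r • W a := by
  rw [ψ, Finsupp.lsum_single, LinearMap.toSpanSingleton_apply]

lemma fg_expand (i j : ZMod 8) :
    fg i j = Finsupp.single (dq 8 i j) 1 - Finsupp.single (dq 8 0 j) 1
      - Finsupp.single (dq 8 i 0) 1 + Finsupp.single (dq 8 0 0) 1 := by
  rw [fg, e, e, qmul_sub_left, qmul_sub_right, qmul_sub_right]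
  simp only [qmul_single, one_mul]
  abel

lemma W_key : ∀ i j k : ZMod 8,
    W (dq 8 (dq 8 i j) k) - W (dq 8 (dq 8 0 j) k) - W (dq 8 (dq 8 i 0) k) + W (dq 8 (dq 8 0 0) k) -
      (W (dq 8 (dq 8 i j) 0) - W (dq 8 (dq 8 0 j) 0) - W (dq 8 (dq 8 i 0) 0) +
        W (dq 8 (dq 8 0 0) 0)) = 0 := by decide

lemma psi_g (i j k : ZMod 8) : ψ (gg i j k) = 0 := by
  rw [gg, fg_expand, e]
  simp only [qmul_sub_left, qmul_sub_right, qmul_add_left, qmul_single, one_mul, map_sub, map_add,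
    psi_single, one_smul]
  exact W_key i j k

lemma gg_expand (i j k : ZMod 8) : gg i j k =
    Finsupp.single (dq 8 (dq 8 i j) k) 1 - Finsupp.single (dq 8 (dq 8 0 j) k) 1
    - Finsupp.single (dq 8 (dq 8 i 0) k) 1 + Finsupp.single (dq 8 (dq 8 0 0) k) 1
    - Finsupp.single (dq 8 (dq 8 i j) 0) 1 + Finsupp.single (dq 8 (dq 8 0 j) 0) 1
    + Finsupp.single (dq 8 (dq 8 i 0) 0) 1 - Finsupp.single (dq 8 (dq 8 0 0) 0) 1 := by
  rw [gg, fg_expand, e]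
  simp only [qmul_sub_left, qmul_sub_right, qmul_add_left, qmul_single, one_mul]
  abel

noncomputable def U5 : ZMod 8 →₀ ℤ :=
  (-2 : ℤ) • fg 1 2 + (5 : ℤ) • fg 1 3 + fg 2 1 + fg 2 2 + (-6 : ℤ) • fg 2 3
noncomputable def U6 : ZMod 8 →₀ ℤ := (-1 : ℤ) • fg 1 2 + (4 : ℤ) • fg 1 3 + (-3 : ℤ) • fg 2 3


lemma dec_1_1 : fg 1 1 = (1 : ℤ) • gg 1 1 1 + (4 : ℤ) • gg 1 1 2 + ((-5) : ℤ) • gg 1 1 3 + (1 : ℤ) • gg 2 1 1 + ((-1) : ℤ) • gg 2 1 2 + ((-1) : ℤ) • gg 2 1 3 + (1 : ℤ) • U5 + (1 : ℤ) • U6 := by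
  simp only [U5, U6, gg_expand, fg_expand]
  ext a
  simp only [Finsupp.coe_add, Finsupp.coe_sub, Finsupp.coe_smul, Pi.add_apply, Pi.sub_apply,
      Pi.smul_apply, Finsupp.single_apply, smul_eq_mul]
  fin_cases a <;> decide

lemma dec_1_2 : fg 1 2 = (1 : ℤ) • gg 1 1 1 + (8 : ℤ) • gg 1 1 2 + ((-10) : ℤ) • gg 1 1 3 + (3 : ℤ) • gg 2 1 1 + ((-2) : ℤ) • gg 2 1 2 + ((-2) : ℤ) • gg 2 1 3 + (2 : ℤ) • U5 + (2 : ℤ) • U6 := by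
  simp only [U5, U6, gg_expand, fg_expand]
  ext a
  simp only [Finsupp.coe_add, Finsupp.coe_sub, Finsupp.coe_smul, Pi.add_apply, Pi.sub_apply,
      Pi.smul_apply, Finsupp.single_apply, smul_eq_mul]
  fin_cases a <;> decide

lemma dec_1_3 : fg 1 3 = (2 : ℤ) • gg 1 1 1 + (11 : ℤ) • gg 1 1 2 + ((-15) : ℤ) • gg 1 1 3 + (4 : ℤ) • gg 2 1 1 + ((-2) : ℤ) • gg 2 1 2 + ((-3) : ℤ) • gg 2 1 3 + (3 : ℤ) • U5 + (3 : ℤ) • U6 := by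
  simp only [U5, U6, gg_expand, fg_expand]
  ext a
  simp only [Finsupp.coe_add, Finsupp.coe_sub, Finsupp.coe_smul, Pi.add_apply, Pi.sub_apply,
      Pi.smul_apply, Finsupp.single_apply, smul_eq_mul]
  fin_cases a <;> decide

lemma dec_2_1 : fg 2 1 = (1 : ℤ) • gg 1 1 1 + (6 : ℤ) • gg 1 1 2 + ((-8) : ℤ) • gg 1 1 3 + (2 : ℤ) • gg 2 1 1 + ((-1) : ℤ) • gg 2 1 2 + ((-2) : ℤ) • gg 2 1 3 + (2 : ℤ) • U5 + (1 : ℤ) • U6 := by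
  simp only [U5, U6, gg_expand, fg_expand]
  ext a
  simp only [Finsupp.coe_add, Finsupp.coe_sub, Finsupp.coe_smul, Pi.add_apply, Pi.sub_apply,
      Pi.smul_apply, Finsupp.single_apply, smul_eq_mul]
  fin_cases a <;> decide

lemma dec_2_2 : fg 2 2 = (1 : ℤ) • gg 1 1 1 + (3 : ℤ) • gg 1 1 2 + ((-5) : ℤ) • gg 1 1 3 + (1 : ℤ) • gg 2 1 1 + ((-2) : ℤ) • gg 2 1 2 + (0 : ℤ) • gg 2 1 3 + (0 : ℤ) • U5 + (2 : ℤ) • U6 := by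
  simp only [U5, U6, gg_expand, fg_expand]
  ext a
  simp only [Finsupp.coe_add, Finsupp.coe_sub, Finsupp.coe_smul, Pi.add_apply, Pi.sub_apply,
      Pi.smul_apply, Finsupp.single_apply, smul_eq_mul]
  fin_cases a <;> decide

lemma dec_2_3 : fg 2 3 = (2 : ℤ) • gg 1 1 1 + (9 : ℤ) • gg 1 1 2 + ((-13) : ℤ) • gg 1 1 3 + (3 : ℤ) • gg 2 1 1 + ((-2) : ℤ) • gg 2 1 2 + ((-2) : ℤ) • gg 2 1 3 + (2 : ℤ) • U5 + (3 : ℤ) • U6 := by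
  simp only [U5, U6, gg_expand, fg_expand]
  ext a
  simp only [Finsupp.coe_add, Finsupp.coe_sub, Finsupp.coe_smul, Pi.add_apply, Pi.sub_apply,
      Pi.smul_apply, Finsupp.single_apply, smul_eq_mul]
  fin_cases a <;> decide

lemma dec_3_1 : fg 3 1 = (2 : ℤ) • gg 1 1 1 + (10 : ℤ) • gg 1 1 2 + ((-14) : ℤ) • gg 1 1 3 + (3 : ℤ) • gg 2 1 1 + ((-2) : ℤ) • gg 2 1 2 + ((-2) : ℤ) • gg 2 1 3 + (3 : ℤ) • U5 + (2 : ℤ) • U6 := by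
  simp only [U5, U6, gg_expand, fg_expand]
  ext a
  simp only [Finsupp.coe_add, Finsupp.coe_sub, Finsupp.coe_smul, Pi.add_apply, Pi.sub_apply,
      Pi.smul_apply, Finsupp.single_apply, smul_eq_mul]
  fin_cases a <;> decide

lemma dec_3_2 : fg 3 2 = (1 : ℤ) • gg 1 1 1 + (5 : ℤ) • gg 1 1 2 + ((-6) : ℤ) • gg 1 1 3 + (2 : ℤ) • gg 2 1 1 + ((-1) : ℤ) • gg 2 1 2 + ((-2) : ℤ) • gg 2 1 3 + (2 : ℤ) • U5 + (0 : ℤ) • U6 := by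
  simp only [U5, U6, gg_expand, fg_expand]
  ext a
  simp only [Finsupp.coe_add, Finsupp.coe_sub, Finsupp.coe_smul, Pi.add_apply, Pi.sub_apply,
      Pi.smul_apply, Finsupp.single_apply, smul_eq_mul]
  fin_cases a <;> decide

lemma dec_3_3 : fg 3 3 = (1 : ℤ) • gg 1 1 1 + (6 : ℤ) • gg 1 1 2 + ((-8) : ℤ) • gg 1 1 3 + (2 : ℤ) • gg 2 1 1 + ((-2) : ℤ) • gg 2 1 2 + ((-1) : ℤ) • gg 2 1 3 + (1 : ℤ) • U5 + (2 : ℤ) • U6 := by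
  simp only [U5, U6, gg_expand, fg_expand]
  ext a
  simp only [Finsupp.coe_add, Finsupp.coe_sub, Finsupp.coe_smul, Pi.add_apply, Pi.sub_apply,
      Pi.smul_apply, Finsupp.single_apply, smul_eq_mul]
  fin_cases a <;> decide

lemma dec_4_1 : fg 4 1 = (1 : ℤ) • gg 1 1 1 + (3 : ℤ) • gg 1 1 2 + ((-5) : ℤ) • gg 1 1 3 + (0 : ℤ) • gg 2 1 1 + ((-2) : ℤ) • gg 2 1 2 + (1 : ℤ) • gg 2 1 3 + (0 : ℤ) • U5 + (2 : ℤ) • U6 := by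
  simp only [U5, U6, gg_expand, fg_expand]
  ext a
  simp only [Finsupp.coe_add, Finsupp.coe_sub, Finsupp.coe_smul, Pi.add_apply, Pi.sub_apply,
      Pi.smul_apply, Finsupp.single_apply, smul_eq_mul]
  fin_cases a <;> decide

lemma dec_4_2 : fg 4 2 = (0 : ℤ) • gg 1 1 1 + (0 : ℤ) • gg 1 1 2 + (0 : ℤ) • gg 1 1 3 + (0 : ℤ) • gg 2 1 1 + ((-1) : ℤ) • gg 2 1 2 + (0 : ℤ) • gg 2 1 3 + (0 : ℤ) • U5 + (0 : ℤ) • U6 := by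
  simp only [U5, U6, gg_expand, fg_expand]
  ext a
  simp only [Finsupp.coe_add, Finsupp.coe_sub, Finsupp.coe_smul, Pi.add_apply, Pi.sub_apply,
      Pi.smul_apply, Finsupp.single_apply, smul_eq_mul]
  fin_cases a <;> decide

lemma dec_4_3 : fg 4 3 = (1 : ℤ) • gg 1 1 1 + (3 : ℤ) • gg 1 1 2 + ((-5) : ℤ) • gg 1 1 3 + (1 : ℤ) • gg 2 1 1 + ((-2) : ℤ) • gg 2 1 2 + (0 : ℤ) • gg 2 1 3 + (0 : ℤ) • U5 + (2 : ℤ) • U6 := by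
  simp only [U5, U6, gg_expand, fg_expand]
  ext a
  simp only [Finsupp.coe_add, Finsupp.coe_sub, Finsupp.coe_smul, Pi.add_apply, Pi.sub_apply,
      Pi.smul_apply, Finsupp.single_apply, smul_eq_mul]
  fin_cases a <;> decide

lemma dec_5_1 : fg 5 1 = (2 : ℤ) • gg 1 1 1 + (6 : ℤ) • gg 1 1 2 + ((-10) : ℤ) • gg 1 1 3 + (1 : ℤ) • gg 2 1 1 + ((-2) : ℤ) • gg 2 1 2 + (0 : ℤ) • gg 2 1 3 + (1 : ℤ) • U5 + (3 : ℤ) • U6 := by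
  simp only [U5, U6, gg_expand, fg_expand]
  ext a
  simp only [Finsupp.coe_add, Finsupp.coe_sub, Finsupp.coe_smul, Pi.add_apply, Pi.sub_apply,
      Pi.smul_apply, Finsupp.single_apply, smul_eq_mul]
  fin_cases a <;> decide

lemma dec_5_2 : fg 5 2 = (2 : ℤ) • gg 1 1 1 + (7 : ℤ) • gg 1 1 2 + ((-11) : ℤ) • gg 1 1 3 + (2 : ℤ) • gg 2 1 1 + ((-2) : ℤ) • gg 2 1 2 + ((-1) : ℤ) • gg 2 1 3 + (2 : ℤ) • U5 + (2 : ℤ) • U6 := by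
  simp only [U5, U6, gg_expand, fg_expand]
  ext a
  simp only [Finsupp.coe_add, Finsupp.coe_sub, Finsupp.coe_smul, Pi.add_apply, Pi.sub_apply,
      Pi.smul_apply, Finsupp.single_apply, smul_eq_mul]
  fin_cases a <;> decide

lemma dec_5_3 : fg 5 3 = (2 : ℤ) • gg 1 1 1 + (8 : ℤ) • gg 1 1 2 + ((-11) : ℤ) • gg 1 1 3 + (3 : ℤ) • gg 2 1 1 + ((-1) : ℤ) • gg 2 1 2 + ((-3) : ℤ) • gg 2 1 3 + (3 : ℤ) • U5 + (1 : ℤ) • U6 := by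
  simp only [U5, U6, gg_expand, fg_expand]
  ext a
  simp only [Finsupp.coe_add, Finsupp.coe_sub, Finsupp.coe_smul, Pi.add_apply, Pi.sub_apply,
      Pi.smul_apply, Finsupp.single_apply, smul_eq_mul]
  fin_cases a <;> decide

lemma dec_6_1 : fg 6 1 = (2 : ℤ) • gg 1 1 1 + (9 : ℤ) • gg 1 1 2 + ((-13) : ℤ) • gg 1 1 3 + (2 : ℤ) • gg 2 1 1 + ((-2) : ℤ) • gg 2 1 2 + ((-1) : ℤ) • gg 2 1 3 + (2 : ℤ) • U5 + (3 : ℤ) • U6 := by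
  simp only [U5, U6, gg_expand, fg_expand]
  ext a
  simp only [Finsupp.coe_add, Finsupp.coe_sub, Finsupp.coe_smul, Pi.add_apply, Pi.sub_apply,
      Pi.smul_apply, Finsupp.single_apply, smul_eq_mul]
  fin_cases a <;> decide

lemma dec_6_2 : fg 6 2 = (1 : ℤ) • gg 1 1 1 + (3 : ℤ) • gg 1 1 2 + ((-5) : ℤ) • gg 1 1 3 + (0 : ℤ) • gg 2 1 1 + ((-2) : ℤ) • gg 2 1 2 + (1 : ℤ) • gg 2 1 3 + (0 : ℤ) • U5 + (2 : ℤ) • U6 := by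
  simp only [U5, U6, gg_expand, fg_expand]
  ext a
  simp only [Finsupp.coe_add, Finsupp.coe_sub, Finsupp.coe_smul, Pi.add_apply, Pi.sub_apply,
      Pi.smul_apply, Finsupp.single_apply, smul_eq_mul]
  fin_cases a <;> decide

lemma dec_6_3 : fg 6 3 = (1 : ℤ) • gg 1 1 1 + (6 : ℤ) • gg 1 1 2 + ((-8) : ℤ) • gg 1 1 3 + (2 : ℤ) • gg 2 1 1 + ((-1) : ℤ) • gg 2 1 2 + ((-2) : ℤ) • gg 2 1 3 + (2 : ℤ) • U5 + (1 : ℤ) • U6 := by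
  simp only [U5, U6, gg_expand, fg_expand]
  ext a
  simp only [Finsupp.coe_add, Finsupp.coe_sub, Finsupp.coe_smul, Pi.add_apply, Pi.sub_apply,
      Pi.smul_apply, Finsupp.single_apply, smul_eq_mul]
  fin_cases a <;> decide

lemma dec_7_1 : fg 7 1 = (0 : ℤ) • gg 1 1 1 + (7 : ℤ) • gg 1 1 2 + ((-8) : ℤ) • gg 1 1 3 + (3 : ℤ) • gg 2 1 1 + (0 : ℤ) • gg 2 1 2 + ((-3) : ℤ) • gg 2 1 3 + (3 : ℤ) • U5 + (0 : ℤ) • U6 := by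
  simp only [U5, U6, gg_expand, fg_expand]
  ext a
  simp only [Finsupp.coe_add, Finsupp.coe_sub, Finsupp.coe_smul, Pi.add_apply, Pi.sub_apply,
      Pi.smul_apply, Finsupp.single_apply, smul_eq_mul]
  fin_cases a <;> decide

lemma dec_7_2 : fg 7 2 = (0 : ℤ) • gg 1 1 1 + (4 : ℤ) • gg 1 1 2 + ((-5) : ℤ) • gg 1 1 3 + (2 : ℤ) • gg 2 1 1 + (0 : ℤ) • gg 2 1 2 + ((-2) : ℤ) • gg 2 1 3 + (2 : ℤ) • U5 + (0 : ℤ) • U6 := by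
  simp only [U5, U6, gg_expand, fg_expand]
  ext a
  simp only [Finsupp.coe_add, Finsupp.coe_sub, Finsupp.coe_smul, Pi.add_apply, Pi.sub_apply,
      Pi.smul_apply, Finsupp.single_apply, smul_eq_mul]
  fin_cases a <;> decide

lemma dec_7_3 : fg 7 3 = (0 : ℤ) • gg 1 1 1 + (2 : ℤ) • gg 1 1 2 + ((-3) : ℤ) • gg 1 1 3 + (1 : ℤ) • gg 2 1 1 + (0 : ℤ) • gg 2 1 2 + ((-1) : ℤ) • gg 2 1 3 + (1 : ℤ) • U5 + (0 : ℤ) • U6 := by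
  simp only [U5, U6, gg_expand, fg_expand]
  ext a
  simp only [Finsupp.coe_add, Finsupp.coe_sub, Finsupp.coe_smul, Pi.add_apply, Pi.sub_apply,
      Pi.smul_apply, Finsupp.single_apply, smul_eq_mul]
  fin_cases a <;> decide

lemma four_U5 : (4 : ℤ) • U5 = ((-1) : ℤ) • gg 1 1 1 + ((-9) : ℤ) • gg 1 1 2 + (11 : ℤ) • gg 1 1 3 + ((-4) : ℤ) • gg 2 1 1 + (0 : ℤ) • gg 2 1 2 + (4 : ℤ) • gg 2 1 3 := by
  simp only [U5, gg_expand, fg_expand]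
  ext a
  simp only [Finsupp.coe_add, Finsupp.coe_sub, Finsupp.coe_smul, Pi.add_apply, Pi.sub_apply,
      Pi.smul_apply, Finsupp.single_apply, smul_eq_mul]
  fin_cases a <;> decide

lemma four_U6 : (4 : ℤ) • U6 = ((-2) : ℤ) • gg 1 1 1 + ((-6) : ℤ) • gg 1 1 2 + (10 : ℤ) • gg 1 1 3 + ((-1) : ℤ) • gg 2 1 1 + (3 : ℤ) • gg 2 1 2 + ((-1) : ℤ) • gg 2 1 3 := by
  simp only [U6, gg_expand, fg_expand]
  ext a
  simp only [Finsupp.coe_add, Finsupp.coe_sub, Finsupp.coe_smul, Pi.add_apply, Pi.sub_apply,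
      Pi.smul_apply, Finsupp.single_apply, smul_eq_mul]
  fin_cases a <;> decide

noncomputable def MM : Submodule ℤ (ZMod 8 →₀ ℤ) := Δ3 8 ⊔ Submodule.span ℤ {U5, U6}

lemma gg_mem_MM (i j k : ZMod 8) : gg i j k ∈ MM := Submodule.mem_sup_left (gg_mem i j k)
lemma U5_mem_MM : U5 ∈ MM := Submodule.mem_sup_right (Submodule.subset_span (by simp))
lemma U6_mem_MM : U6 ∈ MM := Submodule.mem_sup_right (Submodule.subset_span (by simp))

lemma comboMem (a1 a2 a3 a4 a5 a6 c5 c6 : ℤ) :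
    a1 • gg 1 1 1 + a2 • gg 1 1 2 + a3 • gg 1 1 3 + a4 • gg 2 1 1 + a5 • gg 2 1 2
      + a6 • gg 2 1 3 + c5 • U5 + c6 • U6 ∈ MM := by
  refine add_mem (add_mem (add_mem (add_mem (add_mem (add_mem (add_mem ?_ ?_) ?_) ?_) ?_) ?_) ?_) ?_
  · exact Submodule.smul_mem _ _ (gg_mem_MM 1 1 1)
  · exact Submodule.smul_mem _ _ (gg_mem_MM 1 1 2)
  · exact Submodule.smul_mem _ _ (gg_mem_MM 1 1 3)
  · exact Submodule.smul_mem _ _ (gg_mem_MM 2 1 1)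
  · exact Submodule.smul_mem _ _ (gg_mem_MM 2 1 2)
  · exact Submodule.smul_mem _ _ (gg_mem_MM 2 1 3)
  · exact Submodule.smul_mem _ _ U5_mem_MM
  · exact Submodule.smul_mem _ _ U6_mem_MM

lemma dq_per (i j : ZMod 8) : dq 8 i (j + 4) = dq 8 i j := by
  unfold dq
  have h : (2 : ZMod 8) * 4 = 0 := by decide
  rw [mul_add, h, add_zero]

lemma fg_per (i j : ZMod 8) : fg i (j + 4) = fg i j := by
  rw [fg_expand, fg_expand, dq_per, dq_per]

lemma fg_zero_left (j : ZMod 8) : fg 0 j = 0 := by rw [fg_expand]; abel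
lemma fg_zero_right (i : ZMod 8) : fg i 0 = 0 := by rw [fg_expand]; abel

lemma mem_0_0 : fg 0 0 ∈ MM := by rw [fg_zero_left]; exact zero_mem _
lemma mem_0_1 : fg 0 1 ∈ MM := by rw [fg_zero_left]; exact zero_mem _
lemma mem_0_2 : fg 0 2 ∈ MM := by rw [fg_zero_left]; exact zero_mem _
lemma mem_0_3 : fg 0 3 ∈ MM := by rw [fg_zero_left]; exact zero_mem _
lemma mem_0_4 : fg 0 4 ∈ MM := by rw [fg_zero_left]; exact zero_mem _
lemma mem_0_5 : fg 0 5 ∈ MM := by rw [fg_zero_left]; exact zero_mem _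
lemma mem_0_6 : fg 0 6 ∈ MM := by rw [fg_zero_left]; exact zero_mem _
lemma mem_0_7 : fg 0 7 ∈ MM := by rw [fg_zero_left]; exact zero_mem _
lemma mem_1_0 : fg 1 0 ∈ MM := by rw [fg_zero_right]; exact zero_mem _
lemma mem_1_1 : fg 1 1 ∈ MM := by rw [dec_1_1]; exact comboMem 1 4 (-5) 1 (-1) (-1) 1 1
lemma mem_1_2 : fg 1 2 ∈ MM := by rw [dec_1_2]; exact comboMem 1 8 (-10) 3 (-2) (-2) 2 2
lemma mem_1_3 : fg 1 3 ∈ MM := by rw [dec_1_3]; exact comboMem 2 11 (-15) 4 (-2) (-3) 3 3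
lemma mem_1_4 : fg 1 4 ∈ MM := by rw [show (4 : ZMod 8) = 0 + 4 from rfl, fg_per, fg_zero_right]; exact zero_mem _
lemma mem_1_5 : fg 1 5 ∈ MM := by rw [show (5 : ZMod 8) = 1 + 4 from rfl, fg_per]; exact mem_1_1
lemma mem_1_6 : fg 1 6 ∈ MM := by rw [show (6 : ZMod 8) = 2 + 4 from rfl, fg_per]; exact mem_1_2
lemma mem_1_7 : fg 1 7 ∈ MM := by rw [show (7 : ZMod 8) = 3 + 4 from rfl, fg_per]; exact mem_1_3
lemma mem_2_0 : fg 2 0 ∈ MM := by rw [fg_zero_right]; exact zero_mem _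
lemma mem_2_1 : fg 2 1 ∈ MM := by rw [dec_2_1]; exact comboMem 1 6 (-8) 2 (-1) (-2) 2 1
lemma mem_2_2 : fg 2 2 ∈ MM := by rw [dec_2_2]; exact comboMem 1 3 (-5) 1 (-2) 0 0 2
lemma mem_2_3 : fg 2 3 ∈ MM := by rw [dec_2_3]; exact comboMem 2 9 (-13) 3 (-2) (-2) 2 3
lemma mem_2_4 : fg 2 4 ∈ MM := by rw [show (4 : ZMod 8) = 0 + 4 from rfl, fg_per, fg_zero_right]; exact zero_mem _
lemma mem_2_5 : fg 2 5 ∈ MM := by rw [show (5 : ZMod 8) = 1 + 4 from rfl, fg_per]; exact mem_2_1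
lemma mem_2_6 : fg 2 6 ∈ MM := by rw [show (6 : ZMod 8) = 2 + 4 from rfl, fg_per]; exact mem_2_2
lemma mem_2_7 : fg 2 7 ∈ MM := by rw [show (7 : ZMod 8) = 3 + 4 from rfl, fg_per]; exact mem_2_3
lemma mem_3_0 : fg 3 0 ∈ MM := by rw [fg_zero_right]; exact zero_mem _
lemma mem_3_1 : fg 3 1 ∈ MM := by rw [dec_3_1]; exact comboMem 2 10 (-14) 3 (-2) (-2) 3 2
lemma mem_3_2 : fg 3 2 ∈ MM := by rw [dec_3_2]; exact comboMem 1 5 (-6) 2 (-1) (-2) 2 0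
lemma mem_3_3 : fg 3 3 ∈ MM := by rw [dec_3_3]; exact comboMem 1 6 (-8) 2 (-2) (-1) 1 2
lemma mem_3_4 : fg 3 4 ∈ MM := by rw [show (4 : ZMod 8) = 0 + 4 from rfl, fg_per, fg_zero_right]; exact zero_mem _
lemma mem_3_5 : fg 3 5 ∈ MM := by rw [show (5 : ZMod 8) = 1 + 4 from rfl, fg_per]; exact mem_3_1
lemma mem_3_6 : fg 3 6 ∈ MM := by rw [show (6 : ZMod 8) = 2 + 4 from rfl, fg_per]; exact mem_3_2
lemma mem_3_7 : fg 3 7 ∈ MM := by rw [show (7 : ZMod 8) = 3 + 4 from rfl, fg_per]; exact mem_3_3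
lemma mem_4_0 : fg 4 0 ∈ MM := by rw [fg_zero_right]; exact zero_mem _
lemma mem_4_1 : fg 4 1 ∈ MM := by rw [dec_4_1]; exact comboMem 1 3 (-5) 0 (-2) 1 0 2
lemma mem_4_2 : fg 4 2 ∈ MM := by rw [dec_4_2]; exact comboMem 0 0 0 0 (-1) 0 0 0
lemma mem_4_3 : fg 4 3 ∈ MM := by rw [dec_4_3]; exact comboMem 1 3 (-5) 1 (-2) 0 0 2
lemma mem_4_4 : fg 4 4 ∈ MM := by rw [show (4 : ZMod 8) = 0 + 4 from rfl, fg_per, fg_zero_right]; exact zero_mem _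
lemma mem_4_5 : fg 4 5 ∈ MM := by rw [show (5 : ZMod 8) = 1 + 4 from rfl, fg_per]; exact mem_4_1
lemma mem_4_6 : fg 4 6 ∈ MM := by rw [show (6 : ZMod 8) = 2 + 4 from rfl, fg_per]; exact mem_4_2
lemma mem_4_7 : fg 4 7 ∈ MM := by rw [show (7 : ZMod 8) = 3 + 4 from rfl, fg_per]; exact mem_4_3
lemma mem_5_0 : fg 5 0 ∈ MM := by rw [fg_zero_right]; exact zero_mem _
lemma mem_5_1 : fg 5 1 ∈ MM := by rw [dec_5_1]; exact comboMem 2 6 (-10) 1 (-2) 0 1 3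
lemma mem_5_2 : fg 5 2 ∈ MM := by rw [dec_5_2]; exact comboMem 2 7 (-11) 2 (-2) (-1) 2 2
lemma mem_5_3 : fg 5 3 ∈ MM := by rw [dec_5_3]; exact comboMem 2 8 (-11) 3 (-1) (-3) 3 1
lemma mem_5_4 : fg 5 4 ∈ MM := by rw [show (4 : ZMod 8) = 0 + 4 from rfl, fg_per, fg_zero_right]; exact zero_mem _
lemma mem_5_5 : fg 5 5 ∈ MM := by rw [show (5 : ZMod 8) = 1 + 4 from rfl, fg_per]; exact mem_5_1
lemma mem_5_6 : fg 5 6 ∈ MM := by rw [show (6 : ZMod 8) = 2 + 4 from rfl, fg_per]; exact mem_5_2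
lemma mem_5_7 : fg 5 7 ∈ MM := by rw [show (7 : ZMod 8) = 3 + 4 from rfl, fg_per]; exact mem_5_3
lemma mem_6_0 : fg 6 0 ∈ MM := by rw [fg_zero_right]; exact zero_mem _
lemma mem_6_1 : fg 6 1 ∈ MM := by rw [dec_6_1]; exact comboMem 2 9 (-13) 2 (-2) (-1) 2 3
lemma mem_6_2 : fg 6 2 ∈ MM := by rw [dec_6_2]; exact comboMem 1 3 (-5) 0 (-2) 1 0 2
lemma mem_6_3 : fg 6 3 ∈ MM := by rw [dec_6_3]; exact comboMem 1 6 (-8) 2 (-1) (-2) 2 1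
lemma mem_6_4 : fg 6 4 ∈ MM := by rw [show (4 : ZMod 8) = 0 + 4 from rfl, fg_per, fg_zero_right]; exact zero_mem _
lemma mem_6_5 : fg 6 5 ∈ MM := by rw [show (5 : ZMod 8) = 1 + 4 from rfl, fg_per]; exact mem_6_1
lemma mem_6_6 : fg 6 6 ∈ MM := by rw [show (6 : ZMod 8) = 2 + 4 from rfl, fg_per]; exact mem_6_2
lemma mem_6_7 : fg 6 7 ∈ MM := by rw [show (7 : ZMod 8) = 3 + 4 from rfl, fg_per]; exact mem_6_3
lemma mem_7_0 : fg 7 0 ∈ MM := by rw [fg_zero_right]; exact zero_mem _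
lemma mem_7_1 : fg 7 1 ∈ MM := by rw [dec_7_1]; exact comboMem 0 7 (-8) 3 0 (-3) 3 0
lemma mem_7_2 : fg 7 2 ∈ MM := by rw [dec_7_2]; exact comboMem 0 4 (-5) 2 0 (-2) 2 0
lemma mem_7_3 : fg 7 3 ∈ MM := by rw [dec_7_3]; exact comboMem 0 2 (-3) 1 0 (-1) 1 0
lemma mem_7_4 : fg 7 4 ∈ MM := by rw [show (4 : ZMod 8) = 0 + 4 from rfl, fg_per, fg_zero_right]; exact zero_mem _
lemma mem_7_5 : fg 7 5 ∈ MM := by rw [show (5 : ZMod 8) = 1 + 4 from rfl, fg_per]; exact mem_7_1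
lemma mem_7_6 : fg 7 6 ∈ MM := by rw [show (6 : ZMod 8) = 2 + 4 from rfl, fg_per]; exact mem_7_2
lemma mem_7_7 : fg 7 7 ∈ MM := by rw [show (7 : ZMod 8) = 3 + 4 from rfl, fg_per]; exact mem_7_3

set_option maxHeartbeats 1000000 in
lemma row_0 (j : ZMod 8) : fg 0 j ∈ MM := by rw [fg_zero_left]; exact zero_mem _

set_option maxHeartbeats 1000000 in
lemma row_1 (j : ZMod 8) : fg 1 j ∈ MM := by
  fin_cases j <;> first | exact mem_1_0 | exact mem_1_1 | exact mem_1_2 | exact mem_1_3 | exact mem_1_4 | exact mem_1_5 | exact mem_1_6 | exact mem_1_7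

set_option maxHeartbeats 1000000 in
lemma row_2 (j : ZMod 8) : fg 2 j ∈ MM := by
  fin_cases j <;> first | exact mem_2_0 | exact mem_2_1 | exact mem_2_2 | exact mem_2_3 | exact mem_2_4 | exact mem_2_5 | exact mem_2_6 | exact mem_2_7

set_option maxHeartbeats 1000000 in
lemma row_3 (j : ZMod 8) : fg 3 j ∈ MM := by
  fin_cases j <;> first | exact mem_3_0 | exact mem_3_1 | exact mem_3_2 | exact mem_3_3 | exact mem_3_4 | exact mem_3_5 | exact mem_3_6 | exact mem_3_7

set_option maxHeartbeats 1000000 in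
lemma row_4 (j : ZMod 8) : fg 4 j ∈ MM := by
  fin_cases j <;> first | exact mem_4_0 | exact mem_4_1 | exact mem_4_2 | exact mem_4_3 | exact mem_4_4 | exact mem_4_5 | exact mem_4_6 | exact mem_4_7

set_option maxHeartbeats 1000000 in
lemma row_5 (j : ZMod 8) : fg 5 j ∈ MM := by
  fin_cases j <;> first | exact mem_5_0 | exact mem_5_1 | exact mem_5_2 | exact mem_5_3 | exact mem_5_4 | exact mem_5_5 | exact mem_5_6 | exact mem_5_7

set_option maxHeartbeats 1000000 in
lemma row_6 (j : ZMod 8) : fg 6 j ∈ MM := by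
  fin_cases j <;> first | exact mem_6_0 | exact mem_6_1 | exact mem_6_2 | exact mem_6_3 | exact mem_6_4 | exact mem_6_5 | exact mem_6_6 | exact mem_6_7

set_option maxHeartbeats 1000000 in
lemma row_7 (j : ZMod 8) : fg 7 j ∈ MM := by
  fin_cases j <;> first | exact mem_7_0 | exact mem_7_1 | exact mem_7_2 | exact mem_7_3 | exact mem_7_4 | exact mem_7_5 | exact mem_7_6 | exact mem_7_7

set_option maxHeartbeats 1000000 in
lemma fg_mem_MM (i j : ZMod 8) : fg i j ∈ MM := by
  fin_cases i <;> first | exact row_0 j | exact row_1 j | exact row_2 j | exact row_3 j | exact row_4 j | exact row_5 j | exact row_6 j | exact row_7 j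

lemma psi_f (i j : ZMod 8) :
    ψ (fg i j) = W (dq 8 i j) - W (dq 8 0 j) - W (dq 8 i 0) + W (dq 8 0 0) := by
  rw [fg_expand]
  simp only [map_add, map_sub, psi_single, one_smul]

lemma psi_U5 : ψ U5 = ((8 : ZMod 16), (4 : ZMod 16)) := by
  rw [U5]
  simp only [map_add, map_smul, psi_f]
  decide

lemma psi_U6 : ψ U6 = ((12 : ZMod 16), (12 : ZMod 16)) := by
  rw [U6]
  simp only [map_add, map_smul, psi_f]
  decide

lemma D3_ker : Δ3 8 ≤ LinearMap.ker ψ := by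
  refine Delta3_le.trans (Submodule.span_le.mpr ?_)
  rintro z ⟨s, ⟨s', ⟨i, rfl⟩, t', ⟨j, rfl⟩, rfl⟩, t, ⟨k, rfl⟩, rfl⟩
  simpa [LinearMap.mem_ker, gg, fg] using psi_g i j k

lemma U5_mem_D2 : U5 ∈ Δ2 8 := by
  rw [U5]
  exact add_mem (add_mem (add_mem (add_mem (Submodule.smul_mem _ _ (fg_mem 1 2))
    (Submodule.smul_mem _ _ (fg_mem 1 3))) (fg_mem 2 1)) (fg_mem 2 2))
    (Submodule.smul_mem _ _ (fg_mem 2 3))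

lemma U6_mem_D2 : U6 ∈ Δ2 8 := by
  rw [U6]
  exact add_mem (add_mem (Submodule.smul_mem _ _ (fg_mem 1 2))
    (Submodule.smul_mem _ _ (fg_mem 1 3))) (Submodule.smul_mem _ _ (fg_mem 2 3))

lemma four_U5_mem : (4 : ℤ) • U5 ∈ Δ3 8 := by
  rw [four_U5]
  exact add_mem (add_mem (add_mem (add_mem (add_mem (Submodule.smul_mem _ _ (gg_mem 1 1 1))
    (Submodule.smul_mem _ _ (gg_mem 1 1 2))) (Submodule.smul_mem _ _ (gg_mem 1 1 3)))
    (Submodule.smul_mem _ _ (gg_mem 2 1 1))) (Submodule.smul_mem _ _ (gg_mem 2 1 2)))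
    (Submodule.smul_mem _ _ (gg_mem 2 1 3))

lemma four_U6_mem : (4 : ℤ) • U6 ∈ Δ3 8 := by
  rw [four_U6]
  exact add_mem (add_mem (add_mem (add_mem (add_mem (Submodule.smul_mem _ _ (gg_mem 1 1 1))
    (Submodule.smul_mem _ _ (gg_mem 1 1 2))) (Submodule.smul_mem _ _ (gg_mem 1 1 3)))
    (Submodule.smul_mem _ _ (gg_mem 2 1 1))) (Submodule.smul_mem _ _ (gg_mem 2 1 2)))
    (Submodule.smul_mem _ _ (gg_mem 2 1 3))

lemma D2_le_MM : Δ2 8 ≤ MM := by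
  refine Delta2_le.trans (Submodule.span_le.mpr ?_)
  rintro z ⟨s, ⟨i, rfl⟩, t, ⟨j, rfl⟩, rfl⟩
  exact fg_mem_MM i j

lemma key16 : ∀ a1 a2 b1 b2 : Fin 4,
    (a1.val • ((8, 4) : ZMod 16 × ZMod 16) + a2.val • ((12, 12) : ZMod 16 × ZMod 16)
      = b1.val • ((8, 4) : ZMod 16 × ZMod 16) + b2.val • ((12, 12) : ZMod 16 × ZMod 16))
    → a1 = b1 ∧ a2 = b2 := by decide

/-- `|Δ²(R_8)/Δ³(R_8)| = 16`. -/
theorem stmt_15 :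
    Nat.card ((Δ2 8) ⧸ (Δ3 8).comap (Δ2 8).subtype) = 16 := by
  set p : Submodule ℤ (Δ2 8) := (Δ3 8).comap (Δ2 8).subtype with hp
  -- the lift χ
  have hker : p ≤ LinearMap.ker (ψ ∘ₗ (Δ2 8).subtype) := by
    intro x hx
    simpa [LinearMap.mem_ker] using (D3_ker hx : _)
  set χ : (Δ2 8 ⧸ p) →ₗ[ℤ] ZMod 16 × ZMod 16 := Submodule.liftQ p (ψ ∘ₗ (Δ2 8).subtype) hker
    with hχ
  -- surjection from ZMod 4 × ZMod 4
  have hmemUab : ∀ a b : ℤ, a • U5 + b • U6 ∈ Δ2 8 := fun a b =>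
    add_mem (Submodule.smul_mem _ _ U5_mem_D2) (Submodule.smul_mem _ _ U6_mem_D2)
  set sfun : ZMod 4 × ZMod 4 → (Δ2 8 ⧸ p) := fun ab =>
    Submodule.Quotient.mk ⟨(ab.1.val : ℤ) • U5 + (ab.2.val : ℤ) • U6, hmemUab _ _⟩ with hsfun
  have hdvd : ∀ m : ℤ, (4 : ℤ) ∣ (((m : ZMod 4).val : ℤ) - m) := by
    intro m
    have h0 : ((((m : ZMod 4).val : ℤ) - m : ℤ) : ZMod 4) = 0 := by
      push_cast
      simp [ZMod.natCast_val, ZMod.cast_id]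
    exact_mod_cast (ZMod.intCast_zmod_eq_zero_iff_dvd _ 4).mp h0
  have hUdiff : ∀ m : ℤ, (((m : ZMod 4).val : ℤ) - m) • U5 ∈ Δ3 8 := by
    intro m
    obtain ⟨q, hq⟩ := hdvd m
    rw [hq, mul_comm, mul_smul]
    exact Submodule.smul_mem _ _ four_U5_mem
  have hUdiff6 : ∀ m : ℤ, (((m : ZMod 4).val : ℤ) - m) • U6 ∈ Δ3 8 := by
    intro m
    obtain ⟨q, hq⟩ := hdvd m
    rw [hq, mul_comm, mul_smul]
    exact Submodule.smul_mem _ _ four_U6_mem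
  have hsurj : Function.Surjective sfun := by
    intro q
    obtain ⟨⟨x, hx⟩, rfl⟩ := Submodule.Quotient.mk_surjective p q
    have hx2 : x ∈ MM := D2_le_MM hx
    rw [MM, Submodule.mem_sup] at hx2
    obtain ⟨w, hw, z, hz, hwz⟩ := hx2
    rw [Submodule.mem_span_pair] at hz
    obtain ⟨m, k, hmk⟩ := hz
    refine ⟨((m : ZMod 4), (k : ZMod 4)), ?_⟩
    rw [hsfun]
    rw [Submodule.Quotient.eq]
    have hcoe : ((⟨((((m : ZMod 4)).val : ℤ)) • U5 + ((((k : ZMod 4)).val : ℤ)) • U6,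
        hmemUab _ _⟩ : Δ2 8) - ⟨x, hx⟩ : Δ2 8)
        = ⟨(((m : ZMod 4).val : ℤ) • U5 + ((k : ZMod 4).val : ℤ) • U6) - x, by
            exact sub_mem (hmemUab _ _) hx⟩ := rfl
    rw [hp, Submodule.mem_comap, hcoe]
    show (((m : ZMod 4).val : ℤ) • U5 + ((k : ZMod 4).val : ℤ) • U6) - x ∈ Δ3 8
    have hxeq : x = w + (m • U5 + k • U6) := by rw [hmk, hwz]
    have hsplit : (((m : ZMod 4).val : ℤ) • U5 + ((k : ZMod 4).val : ℤ) • U6) - x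
        = (-1 : ℤ) • w + ((((m : ZMod 4).val : ℤ) - m) • U5 + (((k : ZMod 4).val : ℤ) - k) • U6) := by
      rw [hxeq]
      module
    rw [hsplit]
    exact add_mem (Submodule.smul_mem _ _ hw) (add_mem (hUdiff m) (hUdiff6 k))
  have hfin : Finite (Δ2 8 ⧸ p) := Finite.of_surjective sfun hsurj
  have hub : Nat.card (Δ2 8 ⧸ p) ≤ 16 := by
    have := Nat.card_le_card_of_surjective sfun hsurj
    simpa using this
  -- injection from Fin 4 × Fin 4
  set ι : Fin 4 × Fin 4 → (Δ2 8 ⧸ p) := fun ab =>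
    Submodule.Quotient.mk ⟨((ab.1 : ℕ) : ℤ) • U5 + ((ab.2 : ℕ) : ℤ) • U6, hmemUab _ _⟩ with hι
  have hχval : ∀ a b : ℤ, χ (Submodule.Quotient.mk ⟨a • U5 + b • U6, hmemUab a b⟩)
      = a • ((8, 4) : ZMod 16 × ZMod 16) + b • ((12, 12) : ZMod 16 × ZMod 16) := by
    intro a b
    rw [hχ, Submodule.liftQ_apply]
    show ψ (a • U5 + b • U6) = _
    rw [map_add, map_smul, map_smul, psi_U5, psi_U6]
  have hinj : Function.Injective ι := by
    rintro ⟨a1, a2⟩ ⟨b1, b2⟩ h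
    have h2 := congrArg χ h
    rw [hι] at h2
    simp only at h2
    rw [hχval, hχval] at h2
    rw [natCast_zsmul, natCast_zsmul, natCast_zsmul, natCast_zsmul] at h2
    obtain ⟨h3, h4⟩ := key16 a1 a2 b1 b2 h2
    simp [h3, h4]
  have hlb : 16 ≤ Nat.card (Δ2 8 ⧸ p) := by
    have := Nat.card_le_card_of_injective ι hinj
    simpa using this
  omega
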